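/- arXiv:2002.06906 — 4 statements merged into one kernel-verified Lean document; each statement's English description precedes it below -/
import Mathlib

section
/- The vector π = (π_0, ..., π_{d-1}) with π_k = π_0 · [1 - Σ_{j=0}^{k} C(d,j) ρ^{d-j} (1-ρ)^j] for k ≥ 1 is a left invariant vector of the transition matrix M(ρ) of the interrupted probing Markov chain, i.e., π M(ρ) = π. -/
/-- The vector π with π_k = π_0·[1 - Σ_{j=0}^{k} C(d,j) ρ^{d-j}(1-ρ)^j] for k ≥ 1
is a left invariant vector of the interrupted-probing transition matrix M(ρ). -/
theorem stmt0 (d : ℕ) (hd : 1 ≤ d) (ρ : ℝ) (hρ : ρ ∈ Set.Ioo (0:ℝ) 1)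
    (M : Fin d → Fin d → ℝ) (π : Fin d → ℝ)
    (z : Fin d) (hz : (z : ℕ) = 0)
    (hM00 : M z z = ρ ^ d + (d : ℝ) * ρ ^ (d - 1) * (1 - ρ))
    (hM0 : ∀ ℓ : Fin d, 1 ≤ (ℓ : ℕ) →
      M z ℓ = (d.choose ((ℓ : ℕ) + 1) : ℝ) * ρ ^ (d - 1 - (ℓ : ℕ)) * (1 - ρ) ^ ((ℓ : ℕ) + 1))
    (hMk : ∀ k ℓ : Fin d, 1 ≤ (k : ℕ) →
      M k ℓ = if (ℓ : ℕ) = (k : ℕ) - 1 then 1 else 0)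
    (hπ : ∀ k : Fin d, 1 ≤ (k : ℕ) →
      π k = π z * (1 - ∑ j ∈ Finset.range ((k : ℕ) + 1),
        (d.choose j : ℝ) * ρ ^ (d - j) * (1 - ρ) ^ j)) :
    ∀ ℓ : Fin d, ∑ k : Fin d, π k * M k ℓ = π ℓ := by
  intro ℓ
  have hsum : ∑ k : Fin d, π k * M k ℓ
      = π z * M z ℓ + ∑ k ∈ Finset.univ.erase z, π k * M k ℓ :=
    (Finset.add_sum_erase _ _ (Finset.mem_univ z)).symm
  have hpos : ∀ k : Fin d, k ∈ Finset.univ.erase z → 1 ≤ (k : ℕ) := by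
    intro k hk
    rcases Finset.mem_erase.mp hk with ⟨hkz, _⟩
    rcases Nat.eq_zero_or_pos (k : ℕ) with h0 | h0
    · exact absurd (Fin.ext (by omega : (k : ℕ) = (z : ℕ))) hkz
    · exact h0
  have hrest : ∑ k ∈ Finset.univ.erase z, π k * M k ℓ
      = if h : (ℓ : ℕ) + 1 < d then π ⟨(ℓ : ℕ) + 1, h⟩ else 0 := by
    split_ifs with h
    · have hM1 : M ⟨(ℓ : ℕ) + 1, h⟩ ℓ = 1 := by
        rw [hMk _ _ (by simp)]
        simp
      have hmem : (⟨(ℓ : ℕ) + 1, h⟩ : Fin d) ∈ Finset.univ.erase z := by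
        refine Finset.mem_erase.mpr ⟨?_, Finset.mem_univ _⟩
        intro hc
        have : (ℓ : ℕ) + 1 = (z : ℕ) := congrArg Fin.val hc
        omega
      rw [Finset.sum_eq_single_of_mem ⟨(ℓ : ℕ) + 1, h⟩ hmem ?_, hM1, mul_one]
      intro k hk hne
      rw [hMk k ℓ (hpos k hk)]
      have hne' : ¬ ((ℓ : ℕ) = (k : ℕ) - 1) := by
        intro hEq
        apply hne
        apply Fin.ext
        have := hpos k hk
        simp only
        omega
      simp [hne']
    · apply Finset.sum_eq_zero
      intro k hk
      rw [hMk k ℓ (hpos k hk)]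
      have h1 := hpos k hk
      have h2 := k.isLt
      have h3 := ℓ.isLt
      have hne' : ¬ ((ℓ : ℕ) = (k : ℕ) - 1) := by omega
      simp [hne']
  rw [hsum, hrest]
  rcases Nat.eq_zero_or_pos (ℓ : ℕ) with hℓ0 | hℓ1
  · -- ℓ = z
    have hℓz : ℓ = z := Fin.ext (by omega)
    subst hℓz
    rw [hM00]
    split_ifs with h
    · have hv : ((⟨(ℓ : ℕ) + 1, h⟩ : Fin d) : ℕ) = 1 := by simp [hℓ0]
      rw [hπ ⟨(ℓ : ℕ) + 1, h⟩ (by omega)]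
      rw [hv]
      rw [Finset.sum_range_succ, Finset.sum_range_one]
      simp only [Nat.choose_zero_right, Nat.choose_one_right, pow_zero, pow_one,
        Nat.sub_zero, Nat.cast_one]
      ring
    · have hd1 : d = 1 := by omega
      subst hd1
      norm_num
  · -- ℓ ≥ 1
    rw [hM0 ℓ hℓ1, hπ ℓ hℓ1]
    split_ifs with h
    · rw [hπ ⟨(ℓ : ℕ) + 1, h⟩ (by simp)]
      simp only [Fin.val_mk]
      rw [Finset.sum_range_succ]
      have hexp : d - 1 - (ℓ : ℕ) = d - ((ℓ : ℕ) + 1) := by omega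
      rw [hexp]
      ring
    · have hℓd : (ℓ : ℕ) + 1 = d := by have := ℓ.isLt; omega
      have hbin : ∑ j ∈ Finset.range (d + 1),
          (d.choose j : ℝ) * ρ ^ (d - j) * (1 - ρ) ^ j = ((1 - ρ) + ρ) ^ d := by
        rw [add_pow]
        apply Finset.sum_congr rfl
        intro j _
        ring
      rw [show ((1 : ℝ) - ρ + ρ) = 1 by ring, one_pow] at hbin
      rw [Finset.sum_range_succ, Nat.sub_self, pow_zero, Nat.choose_self] at hbin
      push_cast at hbin
      have hS : ∑ j ∈ Finset.range d, (d.choose j : ℝ) * ρ ^ (d - j) * (1 - ρ) ^ j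
          = 1 - (1 - ρ) ^ d := by linarith
      rw [hℓd]
      have he : d - 1 - (ℓ : ℕ) = 0 := by omega
      rw [he, pow_zero, Nat.choose_self, hS]
      push_cast
      ring
end

section
/- For the interrupted probing scheme, the normalization condition Σ_{k=0}^{d-1} π_k = 1 applied to the invariant vector π_k = π_0 · [1 - Σ_{j=0}^{k} C(d,j) ρ^{d-j} (1-ρ)^j] (with π_0's coefficient being 1 for k=0) yields π_0 = 1 / (ρ^d + (1-ρ)d). -/
/-!
Writing `b j = C(d,j) ρ^(d-j) (1-ρ)^j` for the binomial weights, the `k`-th summand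
`1 - ∑_{j ≤ k} b j` is the upper tail `∑_{j > k} b j`, since the weights sum to `1`.
Summing the tails over `k < d` counts each `b j` exactly `j` times, so the sum is the
binomial mean `d (1-ρ)`. The statement replaces the `k = 0` tail `1 - ρ^d` by `1`,
which adds `ρ^d`.
-/

open Finset

theorem Finset.sum_range_tails_eq_sum_nsmul {M : Type*} [AddCommGroup M] (f : ℕ → M) (n : ℕ) :
    ∑ k ∈ range n, (∑ j ∈ range (n + 1), f j - ∑ j ∈ range (k + 1), f j) =
      ∑ j ∈ range (n + 1), j • f j := by
  induction n with
  | zero => simp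
  | succ n ih =>
    have tails_succ : ∀ k ∈ range (n + 1),
        ∑ j ∈ range (n + 2), f j - ∑ j ∈ range (k + 1), f j =
          (∑ j ∈ range (n + 1), f j - ∑ j ∈ range (k + 1), f j) + f (n + 1) := by
      intro k _
      rw [sum_range_succ _ (n + 1)]
      abel
    rw [sum_congr rfl tails_succ, sum_add_distrib, sum_range_succ _ n, ih, sub_self,
      sum_const, card_range, sum_range_succ _ (n + 1)]
    simp

theorem sum_choose_mul_pow_mul_pow_of_add_eq_one {R : Type*} [CommSemiring R] {p q : R}
    (h : p + q = 1) (d : ℕ) :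
    ∑ j ∈ range (d + 1), (d.choose j : R) * p ^ (d - j) * q ^ j = 1 := by
  calc ∑ j ∈ range (d + 1), (d.choose j : R) * p ^ (d - j) * q ^ j
      = (q + p) ^ d := by rw [add_pow]; exact sum_congr rfl fun j _ => by ring
    _ = 1 := by rw [add_comm, h, one_pow]

theorem sum_nsmul_choose_mul_pow_mul_pow_of_add_eq_one {R : Type*} [CommRing R] {p q : R}
    (h : p + q = 1) (d : ℕ) :
    ∑ j ∈ range (d + 1), j • ((d.choose j : R) * p ^ (d - j) * q ^ j) = d • q := by
  obtain rfl : p = 1 - q := eq_sub_of_add_eq h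
  have mean := congrArg (Polynomial.eval q) (bernsteinPolynomial.sum_smul R d)
  simp only [Polynomial.eval_finsetSum, Polynomial.eval_smul, Polynomial.eval_X] at mean
  rw [← mean]
  refine sum_congr rfl fun j _ => ?_
  simp only [bernsteinPolynomial, Polynomial.eval_mul, Polynomial.eval_pow,
    Polynomial.eval_sub, Polynomial.eval_one, Polynomial.eval_X, Polynomial.eval_natCast]
  ring

theorem stmt1_general (d : ℕ) (ρ : ℝ) :
    1 + ∑ k ∈ Finset.Ico 1 d, (1 - ∑ j ∈ Finset.range (k + 1),
      (d.choose j : ℝ) * ρ ^ (d - j) * (1 - ρ) ^ j) = ρ ^ d + (1 - ρ) * d := by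
  set b : ℕ → ℝ := fun j => (d.choose j : ℝ) * ρ ^ (d - j) * (1 - ρ) ^ j
  have weights : ρ + (1 - ρ) = 1 := by ring
  have tails : ∑ k ∈ range d, (1 - ∑ j ∈ range (k + 1), b j) = d * (1 - ρ) := by
    have h := Finset.sum_range_tails_eq_sum_nsmul b d
    rwa [sum_choose_mul_pow_mul_pow_of_add_eq_one weights,
      sum_nsmul_choose_mul_pow_mul_pow_of_add_eq_one weights, nsmul_eq_mul] at h
  rcases Nat.eq_zero_or_pos d with rfl | hd
  · simp
  have first_tail : 1 - ∑ j ∈ range (0 + 1), b j = 1 - ρ ^ d := by simp [b]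
  rw [range_eq_Ico, sum_eq_sum_Ico_succ_bot hd, first_tail] at tails
  linarith

/-- Normalization of the interrupted-probing invariant vector yields
π_0 = 1/(ρ^d + (1-ρ)d), i.e. the identity
Σ_{k=0}^{d-1}[coefficients] = ρ^d + (1-ρ)d, with the k = 0 summand equal to 1. -/
theorem stmt1 (d : ℕ) (hd : 1 ≤ d) (ρ : ℝ) (hρ : ρ ∈ Set.Ioo (0:ℝ) 1) :
    1 + ∑ k ∈ Finset.Ico 1 d, (1 - ∑ j ∈ Finset.range (k + 1),
      (d.choose j : ℝ) * ρ ^ (d - j) * (1 - ρ) ^ j) = ρ ^ d + (1 - ρ) * d :=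
  stmt1_general d ρ
end

section
/- Let d ≥ 2, 0 < ρ < 1, 0 < π_0 ≤ 1, and λ = ρ (mean job size 1, exponential). Define H̄(w) = π_0^{1/d} F̄(w) where F̄(w) = (ρπ_0 + (ρ^{1−d} − ρπ_0)e^{(d−1)w})^{1/(1−d)}. Then H̄ equals the closed form ((ρπ_0^{1/d}) + ((ρπ_0^{1/d})^{1−d} − ρπ_0^{1/d}) e^{(d−1)w})^{1/(1−d)}, i.e., the equilibrium workload ccdf of LL(d) without memory at load ρπ_0^{1/d}. -/
/-!
Scaling a function of the form `X ^ (1 / (1 - d))` by `c > 0` is the same as scaling `X` by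
`c ^ (1 - d)`. With `c = π₀ ^ (1 / d)`, the factor `c ^ (1 - d)` turns `ρ π₀` into `ρ c` and
`ρ ^ (1 - d)` into `(ρ c) ^ (1 - d)`, which is the no-memory closed form at load `ρ c`.
The scaling is legitimate because the base is nonnegative: `ρ π₀ ≤ 1 ≤ ρ ^ (1 - d)`.
-/

open Real

lemma Real.mul_rpow_one_div {c x p : ℝ} (hc : 0 ≤ c) (hx : 0 ≤ x) (hp : p ≠ 0) :
    c * x ^ (1 / p) = (c ^ p * x) ^ (1 / p) := by
  rw [mul_rpow (rpow_nonneg hc p) hx, one_div, rpow_rpow_inv hc hp]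

lemma Real.rpow_one_div_rpow_one_sub_mul_self {x d : ℝ} (hx : 0 < x) (hd : d ≠ 0) :
    (x ^ (1 / d)) ^ (1 - d) * x = x ^ (1 / d) := by
  rw [← rpow_mul hx.le, ← rpow_add_one hx.ne']
  congr 1
  field_simp
  ring

/-- π_0^{1/d} F̄(w) equals the no-memory LL(d) workload ccdf at load ρπ_0^{1/d}. -/
theorem stmt8 (d : ℕ) (hd : 2 ≤ d) (ρ π0 : ℝ) (hρ : 0 < ρ) (hρ1 : ρ < 1)
    (hπ0 : 0 < π0) (hπ1 : π0 ≤ 1)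
    (F : ℝ → ℝ)
    (hF : ∀ w, F w = (ρ * π0 + (ρ ^ ((1:ℝ) - (d:ℝ)) - ρ * π0) *
      Real.exp (((d:ℝ) - 1) * w)) ^ ((1:ℝ) / (1 - (d:ℝ)))) :
    ∀ w : ℝ, 0 ≤ w →
      π0 ^ ((1:ℝ) / d) * F w =
        (ρ * π0 ^ ((1:ℝ) / d) +
          ((ρ * π0 ^ ((1:ℝ) / d)) ^ ((1:ℝ) - (d:ℝ)) - ρ * π0 ^ ((1:ℝ) / d)) *
            Real.exp (((d:ℝ) - 1) * w)) ^ ((1:ℝ) / (1 - (d:ℝ))) := by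
  intro w _
  have hd2 : (2:ℝ) ≤ d := by exact_mod_cast hd
  have hc : 0 < π0 ^ ((1:ℝ) / d) := rpow_pos_of_pos hπ0 _
  have hρπ0 : ρ * π0 ≤ ρ ^ ((1:ℝ) - d) := by
    have := one_le_rpow_of_pos_of_le_one_of_nonpos hρ hρ1.le (by linarith : (1:ℝ) - d ≤ 0)
    nlinarith
  have hX : 0 ≤ ρ * π0 + (ρ ^ ((1:ℝ) - d) - ρ * π0) * exp ((d - 1) * w) := by
    have := exp_pos ((d - 1) * w)
    positivity
  rw [hF, Real.mul_rpow_one_div hc.le hX (by linarith)]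
  congr 1
  have hπ0c := Real.rpow_one_div_rpow_one_sub_mul_self hπ0 (by linarith : (d:ℝ) ≠ 0)
  rw [mul_rpow hρ.le hc.le]
  linear_combination (ρ - ρ * exp ((d - 1) * w)) * hπ0c
end

section
/- Fix integers d ≥ 2 and A ≥ 1. Define u_λ = λ / (1 − (1 − λ^d)^{1/(A+1)})^{1/(d−1)} for λ ∈ (0,1). Then lim_{λ→1−} (1−λ) u_λ' / (1 − u_λ) = 1/(A+1), where u_λ' denotes the derivative with respect to λ. -/
open Filter Set Real

/-- For ISM, with u_λ = λ/(1 - (1-λ^d)^{1/(A+1)})^{1/(d-1)}, the heavy-traffic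
exponent B = lim_{λ→1⁻} (1-λ)u_λ'/(1-u_λ) equals 1/(A+1). -/
theorem stmt17 (d A : ℕ) (hd : 2 ≤ d) (hA : 1 ≤ A)
    (u : ℝ → ℝ)
    (hu : ∀ lam : ℝ, u lam =
      lam / (1 - (1 - lam ^ d) ^ ((1:ℝ) / ((A:ℝ) + 1))) ^ ((1:ℝ) / ((d:ℝ) - 1))) :
    Filter.Tendsto (fun lam => (1 - lam) * deriv u lam / (1 - u lam))
      (nhdsWithin 1 (Set.Iio 1)) (nhds (1 / ((A:ℝ) + 1))) := by
  have hA1 : (0:ℝ) < (A:ℝ) + 1 := by positivity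
  have hAcast : (1:ℝ) ≤ (A:ℝ) := by exact_mod_cast hA
  have hdcast : (2:ℝ) ≤ (d:ℝ) := by exact_mod_cast hd
  set a : ℝ := (1:ℝ) / ((A:ℝ) + 1) with ha_def
  set b : ℝ := (1:ℝ) / ((d:ℝ) - 1) with hb_def
  have ha0 : 0 < a := by rw [ha_def]; positivity
  have ha1 : a < 1 := by rw [ha_def, div_lt_one hA1]; linarith
  have hb0 : 0 < b := by rw [hb_def]; exact div_pos one_pos (by linarith)
  have hdne : (d:ℝ) ≠ 0 := by positivity
  have husubst : u = fun lam : ℝ => lam / (1 - (1 - lam ^ d) ^ a) ^ b := funext hu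
  subst husubst
  set L := nhdsWithin (1:ℝ) (Set.Iio 1) with hL
  have hIoo : Set.Ioo (0:ℝ) 1 ∈ L := by
    rw [hL, ← Set.Ioi_inter_Iio]
    exact Filter.inter_mem (mem_nhdsWithin_of_mem_nhds (Ioi_mem_nhds one_pos))
      self_mem_nhdsWithin
  -- basic tendsto facts
  have hxt : Filter.Tendsto (fun x : ℝ => x) L (nhds 1) :=
    Filter.tendsto_id.mono_left nhdsWithin_le_nhds
  have hP0 : Filter.Tendsto (fun x : ℝ => 1 - x ^ d) L (nhds 0) := by
    have hc : Continuous fun x : ℝ => 1 - x ^ d := continuous_const.sub (continuous_pow d)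
    have h := (hc.tendsto 1).mono_left (nhdsWithin_le_nhds (s := Set.Iio 1))
    simpa using h
  have hPt : Filter.Tendsto (fun x : ℝ => 1 - x ^ d) L (nhdsWithin 0 (Set.Ioi 0)) := by
    rw [tendsto_nhdsWithin_iff]
    refine ⟨hP0, ?_⟩
    filter_upwards [hIoo] with x hx
    have : x ^ d < 1 := pow_lt_one₀ hx.1.le hx.2 (by omega)
    simpa using this
  have hrpow0 : Filter.Tendsto (fun y : ℝ => y ^ a) (nhdsWithin 0 (Set.Ioi 0))
      (nhdsWithin 0 (Set.Ioi 0)) := by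
    rw [tendsto_nhdsWithin_iff]
    constructor
    · have hc : Filter.Tendsto (fun y : ℝ => y ^ a) (nhds 0) (nhds ((0:ℝ) ^ a)) :=
        (Real.continuousAt_rpow_const 0 a (Or.inr ha0.le)).tendsto
      rw [Real.zero_rpow ha0.ne'] at hc
      exact hc.mono_left nhdsWithin_le_nhds
    · filter_upwards [self_mem_nhdsWithin] with y hy
      exact Real.rpow_pos_of_pos hy a
  have hft : Filter.Tendsto (fun x : ℝ => (1 - x ^ d) ^ a) L (nhdsWithin 0 (Set.Ioi 0)) :=
    hrpow0.comp hPt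
  have hf0 : Filter.Tendsto (fun x : ℝ => (1 - x ^ d) ^ a) L (nhds 0) :=
    hft.mono_right nhdsWithin_le_nhds
  have hpow1 : ∀ c : ℝ, Filter.Tendsto (fun x : ℝ => (1 - (1 - x ^ d) ^ a) ^ c) L (nhds 1) := by
    intro c
    have h1 : Filter.Tendsto (fun x : ℝ => 1 - (1 - x ^ d) ^ a) L (nhds 1) := by
      have := tendsto_const_nhds (x := (1:ℝ)) (f := L) |>.sub hf0
      simpa using this
    have hc : ContinuousAt (fun y : ℝ => y ^ c) 1 :=
      Real.continuousAt_rpow_const 1 c (Or.inl one_ne_zero)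
    have h2 := hc.tendsto.comp h1
    simpa [Real.one_rpow, Function.comp_def] using h2
  have hS : Filter.Tendsto (fun x : ℝ => ∑ i ∈ Finset.range d, x ^ i) L (nhds (d : ℝ)) := by
    have hc : Continuous fun x : ℝ => ∑ i ∈ Finset.range d, x ^ i :=
      continuous_finset_sum _ fun i _ => continuous_pow i
    have h := (hc.tendsto 1).mono_left (nhdsWithin_le_nhds (s := Set.Iio 1))
    simpa using h
  have hP1a : Filter.Tendsto (fun x : ℝ => (1 - x ^ d) ^ (1 - a)) L (nhds 0) := by
    have hc : ContinuousAt (fun y : ℝ => y ^ (1 - a)) 0 :=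
      Real.continuousAt_rpow_const 0 _ (Or.inr (by linarith))
    have h := hc.tendsto.comp hP0
    simpa [Real.zero_rpow (by linarith : (1:ℝ) - a ≠ 0), Function.comp_def] using h
  have hE1 : Filter.Tendsto
      (fun x : ℝ => (1 - x ^ d) ^ (1 - a) / ∑ i ∈ Finset.range d, x ^ i) L (nhds 0) := by
    have := hP1a.div hS hdne
    simpa [Pi.div_def] using this
  have hq : Filter.Tendsto (fun y : ℝ => ((1 - y) ^ b - 1) / y)
      (nhdsWithin 0 (Set.Ioi 0)) (nhds (-b)) := by
    have hder : HasDerivAt (fun y : ℝ => (1 - y) ^ b) (-b) 0 := by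
      have h := (HasDerivAt.const_sub 1 (hasDerivAt_id (0:ℝ))).rpow_const (p := b)
        (Or.inl (by norm_num))
      simpa using h
    rw [hasDerivAt_iff_tendsto_slope] at hder
    have hmono : nhdsWithin (0:ℝ) (Set.Ioi 0) ≤ nhdsWithin 0 {(0:ℝ)}ᶜ :=
      nhdsWithin_mono 0 (fun y hy => ne_of_gt hy)
    refine Filter.Tendsto.congr' ?_ (hder.mono_left hmono)
    filter_upwards [self_mem_nhdsWithin] with y _
    rw [slope_def_field]
    simp [Real.one_rpow]
  have hqf : Filter.Tendsto
      (fun x : ℝ => ((1 - (1 - x ^ d) ^ a) ^ b - 1) / (1 - x ^ d) ^ a) L (nhds (-b)) := by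
    have := hq.comp hft
    simpa [Function.comp_def] using this
  have hpowd1 : Filter.Tendsto (fun x : ℝ => x ^ (d - 1)) L (nhds 1) := by
    have hc : Continuous fun x : ℝ => x ^ (d - 1) := continuous_pow (d - 1)
    have h := (hc.tendsto 1).mono_left (nhdsWithin_le_nhds (s := Set.Iio 1))
    simpa using h
  have hinvS : Filter.Tendsto (fun x : ℝ => 1 / ∑ i ∈ Finset.range d, x ^ i) L
      (nhds (1 / (d:ℝ))) := tendsto_const_nhds.div hS hdne
  -- the explicit function F
  have hNum : Filter.Tendsto (fun x : ℝ =>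
      (1 - x ^ d) ^ (1 - a) / (∑ i ∈ Finset.range d, x ^ i) * (1 - (1 - x ^ d) ^ a) ^ b
        - a * b * ↑d * x ^ (d - 1) * (1 - (1 - x ^ d) ^ a) ^ (b - 1) * x *
          (1 / ∑ i ∈ Finset.range d, x ^ i)) L (nhds (-(a * b))) := by
    have h1 := hE1.mul (hpow1 b)
    have h2 := ((((tendsto_const_nhds (x := a * b * (d:ℝ)) (f := L)).mul hpowd1).mul
      (hpow1 (b - 1))).mul hxt).mul hinvS
    have h3 := h1.sub h2
    have hval : (0 * 1 - a * b * (d:ℝ) * 1 * 1 * 1 * (1 / (d:ℝ))) = -(a * b) := by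
      field_simp
      ring
    rw [hval] at h3
    exact h3
  have hDen : Filter.Tendsto (fun x : ℝ =>
      (1 - (1 - x ^ d) ^ a) ^ b *
        (((1 - (1 - x ^ d) ^ a) ^ b - 1) / (1 - x ^ d) ^ a
          + (1 - x ^ d) ^ (1 - a) / ∑ i ∈ Finset.range d, x ^ i)) L (nhds (-b)) := by
    have h := (hpow1 b).mul (hqf.add hE1)
    have hval : (1 * (-b + 0)) = -b := by ring
    rw [hval] at h
    exact h
  have hbne : -b ≠ 0 := by simpa using hb0.ne'
  have hF := hNum.div hDen hbne
  have hlim : -(a * b) / -b = 1 / ((A:ℝ) + 1) := by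
    rw [neg_div_neg_eq]
    rw [mul_div_assoc, div_self hb0.ne', mul_one, ha_def]
  rw [hlim] at hF
  refine Filter.Tendsto.congr' ?_ hF
  filter_upwards [hIoo] with x hx
  obtain ⟨hx0, hx1⟩ := hx
  have hxd0 : (0:ℝ) < x ^ d := pow_pos hx0 d
  have hxdlt : x ^ d < 1 := pow_lt_one₀ hx0.le hx1 (by omega)
  have hPpos : 0 < 1 - x ^ d := by linarith
  have hPlt : 1 - x ^ d < 1 := by linarith
  have hfpos : 0 < (1 - x ^ d) ^ a := Real.rpow_pos_of_pos hPpos a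
  have hflt : (1 - x ^ d) ^ a < 1 := Real.rpow_lt_one hPpos.le hPlt ha0
  have h1fpos : 0 < 1 - (1 - x ^ d) ^ a := by linarith
  have hGpos : 0 < (1 - (1 - x ^ d) ^ a) ^ b := Real.rpow_pos_of_pos h1fpos b
  have hSpos : 0 < ∑ i ∈ Finset.range d, x ^ i := by
    apply Finset.sum_pos (fun i _ => pow_pos hx0 i)
    exact ⟨0, Finset.mem_range.mpr (by omega)⟩
  have hgeo : 1 - x ^ d = (1 - x) * ∑ i ∈ Finset.range d, x ^ i := by
    linear_combination geom_sum_mul x d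
  -- derivative
  have hP' : HasDerivAt (fun y : ℝ => 1 - y ^ d) (-(↑d * x ^ (d - 1))) x :=
    (hasDerivAt_pow d x).const_sub 1
  have hf' : HasDerivAt (fun y : ℝ => (1 - y ^ d) ^ a)
      (-(↑d * x ^ (d - 1)) * a * (1 - x ^ d) ^ (a - 1)) x :=
    hP'.rpow_const (Or.inl hPpos.ne')
  have hG' : HasDerivAt (fun y : ℝ => (1 - (1 - y ^ d) ^ a) ^ b)
      (-(-(↑d * x ^ (d - 1)) * a * (1 - x ^ d) ^ (a - 1)) * b *
        (1 - (1 - x ^ d) ^ a) ^ (b - 1)) x :=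
    (hf'.const_sub 1).rpow_const (Or.inl h1fpos.ne')
  have hu' : HasDerivAt (fun y : ℝ => y / (1 - (1 - y ^ d) ^ a) ^ b)
      ((1 * (1 - (1 - x ^ d) ^ a) ^ b -
          x * (-(-(↑d * x ^ (d - 1)) * a * (1 - x ^ d) ^ (a - 1)) * b *
            (1 - (1 - x ^ d) ^ a) ^ (b - 1))) / ((1 - (1 - x ^ d) ^ a) ^ b) ^ 2) x :=
    (hasDerivAt_id x).div hG' hGpos.ne'
  simp only [Pi.div_apply]
  rw [hu'.deriv]
  have r1 : (1 - x ^ d) ^ (a - 1) = (1 - x ^ d) ^ a / (1 - x ^ d) := by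
    rw [Real.rpow_sub hPpos, Real.rpow_one]
  have r2 : (1 - x ^ d) ^ (1 - a) = (1 - x ^ d) / (1 - x ^ d) ^ a := by
    rw [Real.rpow_sub hPpos, Real.rpow_one]
  rw [r1, r2]
  set S := ∑ i ∈ Finset.range d, x ^ i with hSdef
  set P := 1 - x ^ d with hPdef
  set f := P ^ a with hfdef
  set G := (1 - f) ^ b with hGdef
  set T := (1 - f) ^ (b - 1) with hTdef
  clear_value T G f P S
  have hkey : (G - 1) / f + P / f / S = (G - x) / f := by
    rw [hgeo]
    field_simp
    ring
  rw [hkey]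
  have hxne : (1 : ℝ) - x ≠ 0 := sub_ne_zero.mpr (by linarith)
  by_cases hGx : G = x
  · have h1 : (G - x) / f = 0 := by rw [hGx, sub_self, zero_div]
    have h2 : 1 - x / G = 0 := by rw [hGx, div_self hx0.ne']; ring
    rw [h1, mul_zero, div_zero, h2, div_zero]
  · have hGx' : G - x ≠ 0 := sub_ne_zero.mpr hGx
    rw [hgeo]
    field_simp
end
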